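/- Under the setup of the TTM distribution of a confined multisystem, the moment generating function admits the representation χ_t(α) = tr( e^{−itH} ρ̃ e^{α·E} e^{itH} e^{−α·E} ), where ρ̃ = Σ_e P_e ρ P_e, and in particular α ↦ χ_t(α) is entire analytic on ℂ^ℓ, χ_t(α) ∈ ℝ₊ for α ∈ ℝ^ℓ, |χ_t(α)| ≤ χ_t(Re α) for all α ∈ ℂ^ℓ, and χ_t(−α)⁻¹ ≤ χ_t(α) for all α ∈ ℝ^ℓ. -/

import Mathlib

/-!
Since the projections `P i` form a resolution of the identity, `exp (± α • E)` is the
diagonal operator `∑ i, exp (± α • e i) • P i`. Expanding both exponentials in the trace gives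
`χ α = ∑ (i, i'), exp (-α • (e i' - e i)) * p (i, i')` with
`p (i, i') = tr (P i' U P i ρ P i Uᴴ P i')`, which is nonnegative because `ρ` is, and sums to
`tr ρ = 1` because `U` is unitary. So `χ` is the moment generating function of a probability
distribution on finitely many points, and the remaining claims are facts about such functions;
the last one is Cauchy–Schwarz for `p` against `exp (± α • φ)`.
-/

open scoped ComplexOrder Matrix

namespace CompleteOrthogonalIdempotents

variable {ι : Type*} [Fintype ι]

/-- The functional calculus of a resolution of the identity. -/
def piAlgHom {R A : Type*} [CommSemiring R] [Semiring A] [Algebra R A] {e : ι → A}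
    (he : CompleteOrthogonalIdempotents e) : (ι → R) →ₐ[R] A where
  toFun c := ∑ i, c i • e i
  map_one' := by simpa using he.complete
  map_mul' c d := by
    classical
    simp only [Pi.mul_apply, Finset.sum_mul_sum, smul_mul_smul_comm, he.mul_eq, smul_ite,
      smul_zero, Finset.sum_ite_eq, Finset.mem_univ, if_true]
  map_zero' := by simp
  map_add' c d := by simp [add_smul, Finset.sum_add_distrib]
  commutes' r := by simp [← Finset.smul_sum, he.complete, Algebra.algebraMap_eq_smul_one]

theorem piAlgHom_apply {R A : Type*} [CommSemiring R] [Semiring A] [Algebra R A] {e : ι → A}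
    (he : CompleteOrthogonalIdempotents e) (c : ι → R) : he.piAlgHom c = ∑ i, c i • e i :=
  rfl

theorem exp_sum_smul {𝕂 A : Type*} [RCLike 𝕂] [NormedRing A] [NormedAlgebra 𝕂 A] [Algebra ℚ A]
    [CompleteSpace A] {e : ι → A} (he : CompleteOrthogonalIdempotents e) (c : ι → 𝕂) :
    NormedSpace.exp (∑ i, c i • e i) = ∑ i, NormedSpace.exp (c i) • e i := by
  have h := NormedSpace.map_exp (he.piAlgHom (R := 𝕂))
    (continuous_finsetSum _ fun i _ => (continuous_apply i).smul continuous_const) c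
  simpa [piAlgHom_apply, Pi.exp_def] using h.symm

theorem sum_mul_mul_self_mul {A : Type*} [Semiring A] {e : ι → A}
    (he : CompleteOrthogonalIdempotents e) (x : A) (i : ι) :
    (∑ j, e j * x * e j) * e i = e i * x * e i := by
  rw [Finset.sum_mul, Finset.sum_eq_single i (fun j _ hji => by rw [mul_assoc, he.ortho hji,
    mul_zero]) (by simp), mul_assoc, (he.idem i).eq]

theorem trace_sum_mul_mul_self {n R : Type*} [Fintype n] [DecidableEq n] [CommSemiring R]
    {P : ι → Matrix n n R} (hP : CompleteOrthogonalIdempotents P) (X : Matrix n n R) :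
    (∑ i, P i * X * P i).trace = X.trace := by
  simp_rw [Matrix.trace_sum, Matrix.trace_mul_cycle (P _) X, (hP.idem _).eq, ← Matrix.trace_sum,
    ← Finset.sum_mul, hP.complete, Matrix.one_mul]

end CompleteOrthogonalIdempotents

namespace Matrix

variable {n ι : Type*} [Fintype n] [Fintype ι]

theorem exp_sum_smul_of_completeOrthogonalIdempotents [DecidableEq n] {P : ι → Matrix n n ℂ}
    (hP : CompleteOrthogonalIdempotents P) (c : ι → ℂ) :
    NormedSpace.exp (∑ i, c i • P i) = ∑ i, Complex.exp (c i) • P i := by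
  open scoped Matrix.Norms.Operator in
  rw [Complex.exp_eq_exp_ℂ]
  exact hP.exp_sum_smul c

theorem trace_mul_sum_smul_mul_sum_smul {R : Type*} [CommSemiring R] (A B : Matrix n n R)
    (P Q : ι → Matrix n n R) (a b : ι → R) :
    (A * (∑ i, a i • P i) * B * ∑ i, b i • Q i).trace =
      ∑ k : ι × ι, a k.1 * b k.2 * (A * P k.1 * B * Q k.2).trace := by
  simp only [Matrix.sum_mul, Matrix.mul_smul, Matrix.smul_mul, trace_sum, trace_smul, smul_eq_mul,
    Fintype.sum_prod_type, Finset.mul_sum]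
  rw [Finset.sum_comm]
  refine Finset.sum_congr rfl fun i _ => Finset.sum_congr rfl fun i' _ => ?_
  ring

theorem sum_trace_mul_mul_mul_mul {R : Type*} [CommSemiring R] [DecidableEq n]
    {P : ι → Matrix n n R} (hP : ∑ i, P i = 1) (A B : Matrix n n R) :
    ∑ k : ι × ι, (A * P k.1 * B * P k.2).trace = (A * B).trace := by
  simp only [Fintype.sum_prod_type, ← trace_sum, ← Matrix.mul_sum, ← Matrix.sum_mul, hP,
    Matrix.mul_one]

theorem PosSemidef.trace_mul_mul_conjTranspose_mul_nonneg {ρ Q : Matrix n n ℂ}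
    (hρ : ρ.PosSemidef) (hQ : Q.IsHermitian) (hQQ : Q * Q = Q) (A : Matrix n n ℂ) :
    0 ≤ (A * ρ * Aᴴ * Q).trace := by
  have h : (A * ρ * Aᴴ * Q).trace = ((Q * A) * ρ * (Q * A)ᴴ).trace := by
    rw [conjTranspose_mul, hQ.eq, ← hQQ, ← Matrix.mul_assoc, trace_mul_comm, hQQ]
    simp only [Matrix.mul_assoc]
  rw [h]
  exact (hρ.mul_mul_conjTranspose_same _).trace_nonneg

theorem IsHermitian.conjTranspose_exp_smul [DecidableEq n] {H : Matrix n n ℂ}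
    (hH : H.IsHermitian) (z : ℂ) :
    (NormedSpace.exp (z • H))ᴴ = NormedSpace.exp (star z • H) := by
  rw [← exp_conjTranspose, conjTranspose_smul, hH.eq]

theorem exp_smul_mul_exp_neg_smul [DecidableEq n] (A : Matrix n n ℂ) (z : ℂ) :
    NormedSpace.exp (z • A) * NormedSpace.exp ((-z) • A) = 1 := by
  rw [← exp_add_of_commute _ _ (((Commute.refl A).smul_left _).smul_right _), ← add_smul,
    add_neg_cancel, zero_smul, NormedSpace.exp_zero]

end Matrix

section FiniteMGF

variable {κ J : Type*} [Fintype κ] [Fintype J]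

/-- The paper's `χ(α) = ∑_φ e^{-α·φ} ℙ(φ)`, for weights `p k` at the points `φ k`. -/
noncomputable def finiteMGF (p : κ → ℂ) (φ : κ → J → ℝ) (α : J → ℂ) : ℂ :=
  ∑ k, Complex.exp (-∑ j, α j * φ k j) * p k

theorem analyticOnNhd_finiteMGF (p : κ → ℂ) (φ : κ → J → ℝ) :
    AnalyticOnNhd ℂ (finiteMGF p φ) Set.univ := by
  have hlin : ∀ k, AnalyticOnNhd ℂ (fun α : J → ℂ => ∑ j, α j * φ k j) Set.univ := fun k =>
    Finset.analyticOnNhd_fun_sum _ fun j _ =>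
      ((ContinuousLinearMap.proj j : (J → ℂ) →L[ℂ] ℂ).analyticOnNhd _).mul analyticOnNhd_const
  exact Finset.analyticOnNhd_fun_sum _ fun k _ => (hlin k).neg.cexp.mul analyticOnNhd_const

theorem finiteMGF_ofReal (p : κ → ℂ) (φ : κ → J → ℝ) (β : J → ℝ) :
    finiteMGF p φ (fun j => (β j : ℂ)) = ∑ k, (Real.exp (-∑ j, β j * φ k j) : ℂ) * p k := by
  simp [finiteMGF]

theorem finiteMGF_ofReal_nonneg {p : κ → ℂ} (hp : ∀ k, 0 ≤ p k) (φ : κ → J → ℝ) (β : J → ℝ) :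
    0 ≤ finiteMGF p φ (fun j => (β j : ℂ)) := by
  rw [finiteMGF_ofReal]
  exact Finset.sum_nonneg fun k _ =>
    mul_nonneg (Complex.zero_le_real.mpr (Real.exp_pos _).le) (hp k)

theorem re_finiteMGF_ofReal (p : κ → ℂ) (φ : κ → J → ℝ) (β : J → ℝ) :
    (finiteMGF p φ (fun j => (β j : ℂ))).re =
      ∑ k, Real.exp (-∑ j, β j * φ k j) * (p k).re := by
  simp only [finiteMGF_ofReal, Complex.re_sum, Complex.re_ofReal_mul]

theorem norm_finiteMGF_le {p : κ → ℂ} (hp : ∀ k, 0 ≤ p k) (φ : κ → J → ℝ) (α : J → ℂ) :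
    ‖finiteMGF p φ α‖ ≤ (finiteMGF p φ (fun j => ((α j).re : ℂ))).re := by
  rw [re_finiteMGF_ofReal]
  refine (norm_sum_le _ _).trans_eq (Finset.sum_congr rfl fun k _ => ?_)
  rw [norm_mul, Complex.norm_exp, ← Complex.re_eq_norm.mpr (hp k)]
  simp [Complex.re_sum]

theorem Real.inv_sum_exp_neg_mul_le_sum_exp_mul {w x : κ → ℝ} (hw : ∀ k, 0 ≤ w k)
    (hw1 : ∑ k, w k = 1) : (∑ k, Real.exp (-x k) * w k)⁻¹ ≤ ∑ k, Real.exp (x k) * w k := by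
  have hnonneg : ∀ y : κ → ℝ, ∀ k ∈ Finset.univ, 0 ≤ Real.exp (y k) * w k :=
    fun y k _ => mul_nonneg (Real.exp_pos _).le (hw k)
  have hCS : (∑ k, w k) ^ 2 ≤ (∑ k, Real.exp (x k) * w k) * ∑ k, Real.exp (-x k) * w k :=
    Finset.sum_sq_le_sum_mul_sum_of_sq_le_mul _ (hnonneg x) (hnonneg (-x)) fun k _ =>
      le_of_eq <| by rw [mul_mul_mul_comm, ← Real.exp_add, add_neg_cancel, Real.exp_zero,
        one_mul, sq]
  rw [hw1, one_pow] at hCS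
  have hpos : 0 < ∑ k, Real.exp (-x k) * w k := by
    by_contra! h
    nlinarith [Finset.sum_nonneg (hnonneg x), Finset.sum_nonneg (hnonneg (-x))]
  rwa [inv_le_iff_one_le_mul₀ hpos]

theorem inv_re_finiteMGF_neg_le {p : κ → ℂ} (hp : ∀ k, 0 ≤ p k) (hp1 : ∑ k, p k = 1)
    (φ : κ → J → ℝ) (β : J → ℝ) :
    ((finiteMGF p φ (fun j => ((-β j : ℝ) : ℂ))).re)⁻¹ ≤
      (finiteMGF p φ (fun j => (β j : ℂ))).re := by
  have hw1 : ∑ k, (p k).re = 1 := by rw [← Complex.re_sum, hp1, Complex.one_re]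
  rw [re_finiteMGF_ofReal, re_finiteMGF_ofReal]
  simpa [Finset.sum_neg_distrib] using
    Real.inv_sum_exp_neg_mul_le_sum_exp_mul (fun k => (hp k).1) hw1
      (x := fun k => -∑ j, β j * φ k j)

end FiniteMGF

theorem Matrix.trace_mul_exp_mul_exp_neg_eq_finiteMGF {n ι J : Type*} [Fintype n] [DecidableEq n]
    [Fintype ι] [Fintype J] {P : ι → Matrix n n ℂ} (hP : CompleteOrthogonalIdempotents P)
    {e : ι → J → ℝ} {E : J → Matrix n n ℂ} (hE : ∀ j, E j = ∑ i, ((e i j : ℝ) : ℂ) • P i)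
    (A B : Matrix n n ℂ) (α : J → ℂ) :
    (A * NormedSpace.exp (∑ j, α j • E j) * B * NormedSpace.exp (-∑ j, α j • E j)).trace =
      finiteMGF (fun k : ι × ι => (A * P k.1 * B * P k.2).trace)
        (fun k j => e k.2 j - e k.1 j) α := by
  have hαE : ∑ j, α j • E j = ∑ i, (∑ j, α j * e i j) • P i := by
    simp_rw [hE, Finset.smul_sum, smul_smul, Finset.sum_smul]
    exact Finset.sum_comm
  have hneg : -∑ j, α j • E j = ∑ i, (-∑ j, α j * e i j) • P i := by
    simp [hαE, Finset.sum_neg_distrib]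
  rw [hneg, hαE, exp_sum_smul_of_completeOrthogonalIdempotents hP,
    exp_sum_smul_of_completeOrthogonalIdempotents hP, trace_mul_sum_smul_mul_sum_smul, finiteMGF]
  refine Finset.sum_congr rfl fun k _ => ?_
  rw [← Complex.exp_add]
  congr 2
  simp only [Complex.ofReal_sub, mul_sub, Finset.sum_sub_distrib]
  ring

section TwoTimeWeight

variable {n ι : Type*} [Fintype n] [Fintype ι]

/-- The probability that the first measurement of `ρ` yields `P k.1` and, after evolution by `U`,
the second one yields `P k.2`. -/
def twoTimeWeight (U ρ : Matrix n n ℂ) (P : ι → Matrix n n ℂ) (k : ι × ι) : ℂ :=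
  (U * (∑ i, P i * ρ * P i) * P k.1 * Uᴴ * P k.2).trace

theorem twoTimeWeight_nonneg [DecidableEq n] {P : ι → Matrix n n ℂ}
    (hP : CompleteOrthogonalIdempotents P) (hPherm : ∀ i, (P i).IsHermitian) {ρ : Matrix n n ℂ}
    (hρ : ρ.PosSemidef) (U : Matrix n n ℂ) (k : ι × ι) : 0 ≤ twoTimeWeight U ρ P k := by
  have h : U * (∑ i, P i * ρ * P i) * P k.1 * Uᴴ = (U * P k.1) * ρ * (U * P k.1)ᴴ := by
    rw [Matrix.conjTranspose_mul, (hPherm k.1).eq, Matrix.mul_assoc U, hP.sum_mul_mul_self_mul]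
    simp only [Matrix.mul_assoc]
  rw [twoTimeWeight, h]
  exact hρ.trace_mul_mul_conjTranspose_mul_nonneg (hPherm k.2) (hP.idem k.2).eq _

theorem sum_twoTimeWeight [DecidableEq n] {P : ι → Matrix n n ℂ}
    (hP : CompleteOrthogonalIdempotents P) {U : Matrix n n ℂ} (hU : Uᴴ * U = 1)
    (ρ : Matrix n n ℂ) : ∑ k, twoTimeWeight U ρ P k = ρ.trace := by
  simp only [twoTimeWeight]
  rw [Matrix.sum_trace_mul_mul_mul_mul hP.complete, Matrix.trace_mul_cycle, hU, Matrix.one_mul,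
    hP.trace_sum_mul_mul_self]

end TwoTimeWeight

/-- the TTM moment generating function admits the trace representation
χ_t(α) = tr(e^{−itH} ρ̃ e^{α·E} e^{itH} e^{−α·E}) with ρ̃ = Σ_e P_e ρ P_e; it is entire
in α ∈ ℂ^ℓ, nonnegative real for real α, satisfies |χ_t(α)| ≤ χ_t(Re α) and
χ_t(−α)⁻¹ ≤ χ_t(α) for real α. -/
theorem ttm_mgf_trace_representation
    {n ι : Type*} [Fintype n] [DecidableEq n] [Fintype ι] {ℓ : ℕ}
    (P : ι → Matrix n n ℂ)
    (hPherm : ∀ i, (P i).IsHermitian) (hPidem : ∀ i, P i * P i = P i)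
    (hPorth : ∀ i i', i ≠ i' → P i * P i' = 0) (hPsum : ∑ i, P i = 1)
    (e : ι → Fin ℓ → ℝ)
    (E : Fin ℓ → Matrix n n ℂ)
    (hE : ∀ j, E j = ∑ i, ((e i j : ℝ) : ℂ) • P i)
    (V : Matrix n n ℂ) (hV : V.IsHermitian)
    (H : Matrix n n ℂ) (hH : H = (∑ j, E j) + V)
    (ρ : Matrix n n ℂ) (hρ : ρ.PosSemidef) (hρtr : ρ.trace = 1)
    (ρt : Matrix n n ℂ) (hρt : ρt = ∑ i, P i * ρ * P i)
    (t : ℝ)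
    (χ : (Fin ℓ → ℂ) → ℂ)
    (hχ : ∀ α : Fin ℓ → ℂ, χ α = ∑ i, ∑ i',
      Complex.exp (-(∑ j, α j * (((e i' j : ℝ) : ℂ) - ((e i j : ℝ) : ℂ)))) *
        (NormedSpace.exp ((-(Complex.I * t)) • H) * ρt * P i *
          NormedSpace.exp ((Complex.I * t) • H) * P i').trace) :
    (∀ α : Fin ℓ → ℂ, χ α =
      (NormedSpace.exp ((-(Complex.I * t)) • H) * ρt *
        NormedSpace.exp (∑ j, α j • E j) *
        NormedSpace.exp ((Complex.I * t) • H) *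
        NormedSpace.exp (-(∑ j, α j • E j))).trace) ∧
    AnalyticOnNhd ℂ χ Set.univ ∧
    (∀ α : Fin ℓ → ℝ, (χ (fun j => ((α j : ℝ) : ℂ))).im = 0 ∧
      0 ≤ (χ (fun j => ((α j : ℝ) : ℂ))).re) ∧
    (∀ α : Fin ℓ → ℂ, ‖χ α‖ ≤ (χ (fun j => (((α j).re : ℝ) : ℂ))).re) ∧
    (∀ α : Fin ℓ → ℝ, ((χ (fun j => ((-α j : ℝ) : ℂ))).re)⁻¹ ≤
      (χ (fun j => ((α j : ℝ) : ℂ))).re) := by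
  have hP : CompleteOrthogonalIdempotents P := ⟨⟨hPidem, hPorth⟩, hPsum⟩
  have hHerm : H.IsHermitian := by
    rw [hH]
    refine IsSelfAdjoint.isHermitian (.add (isSelfAdjoint_sum _ fun j _ => ?_) hV.isSelfAdjoint)
    rw [hE]
    exact isSelfAdjoint_sum _ fun i _ => ((hPherm i).smul (Complex.conj_ofReal _)).isSelfAdjoint
  set U := NormedSpace.exp ((-(Complex.I * t)) • H)
  have hUadj : Uᴴ = NormedSpace.exp ((Complex.I * t) • H) := by
    rw [hHerm.conjTranspose_exp_smul]
    simp
  rw [← hUadj] at hχ ⊢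
  subst hρt
  obtain rfl : χ = finiteMGF (twoTimeWeight U ρ P) (fun k j => e k.2 j - e k.1 j) := by
    ext α
    rw [hχ, finiteMGF, Fintype.sum_prod_type]
    push_cast
    rfl
  have hp := twoTimeWeight_nonneg hP hPherm hρ U
  have hp1 : ∑ k, twoTimeWeight U ρ P k = 1 := by
    rw [sum_twoTimeWeight hP (hUadj ▸ Matrix.exp_smul_mul_exp_neg_smul H _), hρtr]
  refine ⟨fun α => ?_, analyticOnNhd_finiteMGF _ _, fun α => ?_, norm_finiteMGF_le hp _,
    inv_re_finiteMGF_neg_le hp hp1 _⟩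
  · exact (Matrix.trace_mul_exp_mul_exp_neg_eq_finiteMGF hP hE _ _ α).symm
  · obtain ⟨hre, him⟩ := Complex.nonneg_iff.mp (finiteMGF_ofReal_nonneg hp _ α)
    exact ⟨him.symm, hre⟩
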